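/- Define P : {A,B,•}* → [0,1] recursively by P(ε) = 1/2, P(A·w) = 1/2 + (1/2)·P(w), P(B·w) = (1/2)·P(w), P(•·w) = P(w). Then for every word w ∈ {A,B,•}*, P(w) = ρ(trim(w)·Z'), where ρ(x₁…x_n) = Σ_i ϑ(x_i)/2^i with ϑ(A)=ϑ(Z')=1, ϑ(B)=0. -/
import Mathlib


inductive S3 where
  | A : S3
  | B : S3
  | dot : S3
deriving DecidableEq

inductive L3 where
  | A : L3
  | B : L3
  | Z' : L3
deriving DecidableEq

/-- trim deletes every • and lands in words over {A,B} ⊆ {A,B,Z'}. -/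
def trim : List S3 → List L3
  | [] => []
  | S3.A :: w => L3.A :: trim w
  | S3.B :: w => L3.B :: trim w
  | S3.dot :: w => trim w

def theta : L3 → ℚ
  | L3.A => 1
  | L3.B => 0
  | L3.Z' => 1

def rho : List L3 → ℚ
  | [] => 0
  | x :: w => theta x * (1/2) + (1/2) * rho w

/-- P(ε)=1/2, P(A·w)=1/2+(1/2)P(w), P(B·w)=(1/2)P(w), P(•·w)=P(w). -/
def P : List S3 → ℚ
  | [] => 1/2
  | S3.A :: w => 1/2 + (1/2) * P w
  | S3.B :: w => (1/2) * P w
  | S3.dot :: w => P w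

/-- For every word w over {A,B,•}, P(w) = ρ(trim(w)·Z'). -/
theorem P_eq_rho_trim (w : List S3) : P w = rho (trim w ++ [L3.Z']) := by
  induction w with
  | nil => simp [P, rho, trim, theta]
  | cons h t ih => cases h <;> simp [P, rho, trim, theta, ih]
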